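/- arXiv:2005.06659 — 3 statements merged into one kernel-verified Lean document; each statement's English description precedes it below -/
import Mathlib

section
/- Let S_0F ⊆ S be the set of sorts s such that there is no finite tree of sort s. Define h : P(S) → P(S) by h(Y) = Y \ { s ∈ S | some generator f : s₁ × ⋯ × sₙ → s in F_s satisfies sᵢ ∉ Y for all i ∈ {1,…,n} }. Then h is monotone, S_0F is the greatest fixed point of h, and S_0F = ⋂_{d ∈ ℕ} h^{d+1}(S); moreover, every sort having a finite tree of depth d is excluded from h^{d+1}(S). -/
set_option linter.unusedVariables false

/-- A many-sorted signature: sorts and generators (function symbols),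
each generator `g` having argument sorts `src g` and target sort `tgt g`. -/
structure Sig where
  Srt : Type
  Gen : Type
  tgt : Gen → Srt
  src : Gen → List Srt

namespace Sig

variable (σ : Sig)

/-- The generators of a sort `s`. -/
def Gens (s : σ.Srt) : Set σ.Gen := { g | σ.tgt g = s }

/-- A labeling of positions (lists of natural numbers) by generators is a valid
tree labeling if children exist exactly according to arity and have the right sorts. -/
def IsLabeling (L : List ℕ → Option σ.Gen) : Prop :=
  (∀ p, L p = none → ∀ i, L (p ++ [i]) = none) ∧
  (∀ p g, L p = some g → ∀ i, ((L (p ++ [i])).isSome ↔ i < (σ.src g).length)) ∧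
  (∀ p g i g', L p = some g → L (p ++ [i]) = some g' →
      (σ.src g)[i]? = some (σ.tgt g'))

/-- A (possibly infinite) tree of sort `s`. -/
structure Tree (s : σ.Srt) where
  L : List ℕ → Option σ.Gen
  isLab : σ.IsLabeling L
  root : ∃ g, L [] = some g ∧ σ.tgt g = s

variable {σ}

/-- A tree is finite if it has finitely many nodes. -/
def Tree.IsFinite {s : σ.Srt} (t : σ.Tree s) : Prop :=
  { p : List ℕ | (t.L p).isSome }.Finite

/-- The tree has depth at most `d`. -/
def Tree.DepthLE {s : σ.Srt} (t : σ.Tree s) (d : ℕ) : Prop :=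
  ∀ p, (t.L p).isSome → p.length ≤ d

variable (σ)

/-- Build a tree with root labeled `g` from given immediate subtrees. -/
def build (g : σ.Gen) (c : ∀ i : Fin (σ.src g).length, σ.Tree ((σ.src g).get i)) :
    σ.Tree (σ.tgt g) where
  L := fun p =>
    match p with
    | [] => some g
    | i :: q => if h : i < (σ.src g).length then (c ⟨i, h⟩).L q else none
  isLab := by
    refine ⟨?_, ?_, ?_⟩
    · intro p hp i
      match p with
      | [] => simp at hp
      | j :: q =>
        simp only [List.cons_append]
        by_cases h : j < (σ.src g).length
        · simp only [dif_pos h] at hp ⊢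
          exact (c ⟨j, h⟩).isLab.1 q hp i
        · simp only [dif_neg h]
    · intro p g' hp i
      match p with
      | [] =>
        injection hp with hg
        subst hg
        by_cases h : i < (σ.src g).length
        · simp only [List.nil_append, dif_pos h]
          obtain ⟨g₀, h₀, -⟩ := (c ⟨i, h⟩).root
          simp [h₀, h]
        · simp [List.nil_append, dif_neg h, h]
      | j :: q =>
        by_cases h : j < (σ.src g).length
        · simp only [dif_pos h] at hp
          simp only [List.cons_append, dif_pos h]
          exact (c ⟨j, h⟩).isLab.2.1 q g' hp i
        · simp only [dif_neg h] at hp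
          cases hp
    · intro p g' i g'' hp hpi
      match p with
      | [] =>
        injection hp with hg
        subst hg
        by_cases h : i < (σ.src g).length
        · simp only [List.nil_append, dif_pos h] at hpi
          obtain ⟨g₀, h₀, htgt⟩ := (c ⟨i, h⟩).root
          rw [h₀, Option.some.injEq] at hpi
          subst hpi
          rw [List.getElem?_eq_getElem h]
          exact congrArg some htgt.symm
        · simp only [List.nil_append, dif_neg h] at hpi
          cases hpi
      | j :: q =>
        by_cases h : j < (σ.src g).length
        · simp only [dif_pos h] at hp
          simp only [List.cons_append, dif_pos h] at hpi
          exact (c ⟨j, h⟩).isLab.2.2 q g' i g'' hp hpi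
        · simp only [dif_neg h] at hp
          cases hp
  root := ⟨g, rfl, rfl⟩

/-- Sorts with no infinite trees. -/
def S0I : Set σ.Srt := { s | ∀ t : σ.Tree s, t.IsFinite }
/-- Sorts with no finite trees. -/
def S0F : Set σ.Srt := { s | ∀ t : σ.Tree s, ¬ t.IsFinite }
/-- Sorts with only finitely many finite trees. -/
def SFF : Set σ.Srt := { s | { t : σ.Tree s | t.IsFinite }.Finite }
/-- Sorts with only finitely many infinite trees. -/
def SFI : Set σ.Srt := { s | { t : σ.Tree s | ¬ t.IsFinite }.Finite }
/-- Sorts with exactly one infinite tree. -/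
def S1I : Set σ.Srt := { s | ∃! t : σ.Tree s, ¬ t.IsFinite }

/-- Terms of the (extended) first-order language of trees. Variables are
pairs of a sort and a number. -/
inductive Tm : σ.Srt → Type
  | var (s : σ.Srt) (n : ℕ) : Tm s
  | app (g : σ.Gen) (args : ∀ i : Fin (σ.src g).length, Tm ((σ.src g).get i)) :
      Tm (σ.tgt g)

/-- Valuations assign trees to (sorted) variables. -/
def Val := ∀ s : σ.Srt, ℕ → σ.Tree s

variable {σ}

/-- Evaluation of a term in the structure of trees under a valuation. -/
def Tm.eval (ρ : σ.Val) : ∀ {s : σ.Srt}, σ.Tm s → σ.Tree s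
  | _, .var s n => ρ s n
  | _, .app g args => σ.build g (fun i => (args i).eval ρ)

/-- The (sorted) free variables of a term. -/
def Tm.fv : ∀ {s : σ.Srt}, σ.Tm s → Set ((s : σ.Srt) × ℕ)
  | _, .var s n => {⟨s, n⟩}
  | _, .app _ args => ⋃ i, (args i).fv

/-- A term is flat if it is a variable or a generator applied to variables. -/
def Tm.IsFlat : ∀ {s : σ.Srt}, σ.Tm s → Prop
  | _, .var _ _ => True
  | _, .app g args => ∀ i : Fin (σ.src g).length, ∃ n, args i = Tm.var ((σ.src g).get i) n

/-- A term of the form `f(z̄)`. -/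
def Tm.IsApp : ∀ {s : σ.Srt}, σ.Tm s → Prop
  | _, .var _ _ => False
  | _, .app _ _ => True

open Classical in
/-- Update a valuation at one sorted variable. -/
noncomputable def updV (ρ : σ.Val) (s : σ.Srt) (n : ℕ) (t : σ.Tree s) : σ.Val :=
  fun s' m =>
    if h : s' = s then
      (if m = n then cast (congrArg σ.Tree h.symm) t else ρ s' m)
    else ρ s' m

variable (σ)

/-- Formulae of the extended first-order language of trees: equality,
the finiteness predicates `fin`, propositional connectives and sorted quantifiers. -/
inductive Fml : Type
  | tru : Fml
  | fls : Fml
  | eq {s : σ.Srt} (a b : σ.Tm s) : Fml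
  | fin {s : σ.Srt} (a : σ.Tm s) : Fml
  | not (φ : Fml) : Fml
  | and (φ ψ : Fml) : Fml
  | or (φ ψ : Fml) : Fml
  | imp (φ ψ : Fml) : Fml
  | ex (s : σ.Srt) (n : ℕ) (φ : Fml) : Fml
  | all (s : σ.Srt) (n : ℕ) (φ : Fml) : Fml

variable {σ}

/-- Satisfaction of a formula in the structure `𝒯` of trees under a valuation. -/
def Fml.Sat (ρ : σ.Val) : σ.Fml → Prop
  | .tru => True
  | .fls => False
  | .eq a b => a.eval ρ = b.eval ρ
  | .fin a => (a.eval ρ).IsFinite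
  | .not φ => ¬ φ.Sat ρ
  | .and φ ψ => φ.Sat ρ ∧ ψ.Sat ρ
  | .or φ ψ => φ.Sat ρ ∨ ψ.Sat ρ
  | .imp φ ψ => φ.Sat ρ → ψ.Sat ρ
  | .ex s n φ => ∃ t : σ.Tree s, φ.Sat (updV ρ s n t)
  | .all s n φ => ∀ t : σ.Tree s, φ.Sat (updV ρ s n t)

/-- The free variables of a formula. -/
def Fml.fv : σ.Fml → Set ((s : σ.Srt) × ℕ)
  | .tru => ∅
  | .fls => ∅
  | .eq a b => a.fv ∪ b.fv
  | .fin a => a.fv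
  | .not φ => φ.fv
  | .and φ ψ => φ.fv ∪ ψ.fv
  | .or φ ψ => φ.fv ∪ ψ.fv
  | .imp φ ψ => φ.fv ∪ ψ.fv
  | .ex s n φ => φ.fv \ {⟨s, n⟩}
  | .all s n φ => φ.fv \ {⟨s, n⟩}

/-- Two formulae are equivalent in the extended theory of trees if they are
satisfied by exactly the same valuations. -/
def FmlEquiv (φ ψ : σ.Fml) : Prop := ∀ ρ : σ.Val, φ.Sat ρ ↔ ψ.Sat ρ

end Sig

/-- The operator `h` of Algorithm 1 whose greatest fixed point is the set of sorts
with no finite trees. -/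
def hFun (σ : Sig) (Y : Set σ.Srt) : Set σ.Srt :=
  Y \ { s | ∃ g ∈ σ.Gens s, ∀ s' ∈ σ.src g, s' ∉ Y }

/-!
A sort has a finite tree iff some generator of it has only argument sorts with finite trees,
so `S_0F` is a fixed point of `h`. Conversely, by induction on `d`, the root sort of a tree of
depth at most `d` leaves `h^[d+1] S`: every argument sort of its root generator carries a
subtree of depth at most `d - 1` and has therefore already left `h^[d] S`. A finite tree has
bounded depth, so `⋂ d, h^[d+1] S ⊆ S_0F`, while every fixed point of the monotone map `h` lies
below all the iterates `h^[n] S`.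
-/

theorem Monotone.le_iterate_of_map_eq {α : Type*} [Preorder α] {f : α → α} (hf : Monotone f)
    {x y : α} (hx : f x = x) (hxy : x ≤ y) (n : ℕ) : x ≤ f^[n] y :=
  calc x = f^[n] x := (Function.iterate_fixed hx n).symm
    _ ≤ f^[n] y := hf.iterate n hxy

namespace Sig

variable {σ : Sig} {s : σ.Srt}

theorem notMem_S0F_iff : s ∉ σ.S0F ↔ ∃ t : σ.Tree s, t.IsFinite := by
  simp [S0F]

namespace Tree

def child (t : σ.Tree s) {g : σ.Gen} (hg : t.L [] = some g) (i : Fin (σ.src g).length) :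
    σ.Tree ((σ.src g).get i) where
  L q := t.L (i :: q)
  isLab :=
    ⟨fun p => t.isLab.1 (i :: p), fun p => t.isLab.2.1 (i :: p), fun p => t.isLab.2.2 (i :: p)⟩
  root := by
    have hsome : (t.L ([] ++ [(i : ℕ)])).isSome := (t.isLab.2.1 [] g hg i).mpr i.isLt
    obtain ⟨g', hg'⟩ := Option.isSome_iff_exists.mp hsome
    have hsrc := t.isLab.2.2 [] g i g' hg hg'
    rw [List.getElem?_eq_getElem i.isLt, Option.some_inj] at hsrc
    exact ⟨g', hg', hsrc.symm⟩

theorem DepthLE.child {t : σ.Tree s} {d : ℕ} (hd : t.DepthLE (d + 1)) {g : σ.Gen}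
    (hg : t.L [] = some g) (i : Fin (σ.src g).length) : (t.child hg i).DepthLE d :=
  fun q hq => Nat.le_of_succ_le_succ (hd (i :: q) hq)

theorem DepthLE.src_eq_nil {t : σ.Tree s} (hd : t.DepthLE 0) {g : σ.Gen}
    (hg : t.L [] = some g) : σ.src g = [] := by
  rw [← List.length_eq_zero_iff, ← Nat.le_zero]
  by_contra! hpos
  exact absurd (hd [0] ((t.isLab.2.1 [] g hg 0).mpr hpos)) (by simp)

theorem IsFinite.exists_depthLE {t : σ.Tree s} (hf : t.IsFinite) : ∃ d, t.DepthLE d := by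
  obtain ⟨d, hd⟩ := (hf.image List.length).bddAbove
  exact ⟨d, fun p hp => hd (Set.mem_image_of_mem _ hp)⟩

end Tree

theorem build_isFinite (g : σ.Gen) {c : ∀ i : Fin (σ.src g).length, σ.Tree ((σ.src g).get i)}
    (hc : ∀ i, (c i).IsFinite) : (σ.build g c).IsFinite := by
  refine (((Set.finite_iUnion fun i => (hc i).image (List.cons (i : ℕ))).insert []).subset ?_)
  rintro (_ | ⟨j, q⟩) hp
  · exact Set.mem_insert _ _
  · by_cases hj : j < (σ.src g).length
    · simp only [Set.mem_ofPred_eq, build, dif_pos hj] at hp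
      exact Set.mem_insert_of_mem _ (Set.mem_iUnion.mpr ⟨⟨j, hj⟩, q, hp, rfl⟩)
    · simp [build, hj] at hp

theorem exists_isFinite_of_forall_src (g : σ.Gen)
    (h : ∀ s' ∈ σ.src g, ∃ t : σ.Tree s', t.IsFinite) :
    ∃ t : σ.Tree (σ.tgt g), t.IsFinite := by
  choose c hc using fun i : Fin (σ.src g).length => h _ (List.get_mem _ i)
  exact ⟨σ.build g c, build_isFinite g hc⟩

end Sig

open Sig

section

variable {σ : Sig}

theorem hFun_monotone : Monotone (hFun σ) :=
  fun _ _ hY _ hs => ⟨hY hs.1, fun ⟨g, hg, hsrc⟩ => hs.2 ⟨g, hg, fun s' hs' h => hsrc s' hs' (hY h)⟩⟩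

theorem tgt_notMem_hFun {Y : Set σ.Srt} {g : σ.Gen} (h : ∀ s' ∈ σ.src g, s' ∉ Y) :
    σ.tgt g ∉ hFun σ Y :=
  fun hs => hs.2 ⟨g, rfl, h⟩

theorem hFun_S0F : hFun σ σ.S0F = σ.S0F := by
  refine Set.Subset.antisymm Set.sdiff_subset fun s hs => ⟨hs, ?_⟩
  rintro ⟨g, rfl, hsrc⟩
  exact notMem_S0F_iff.mpr (exists_isFinite_of_forall_src g fun s' h => notMem_S0F_iff.mp
    (hsrc s' h)) hs

theorem Sig.Tree.DepthLE.notMem_iterate_hFun {s : σ.Srt} {t : σ.Tree s} {d : ℕ}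
    (hd : t.DepthLE d) : s ∉ (hFun σ)^[d + 1] Set.univ := by
  induction d generalizing s with
  | zero =>
    obtain ⟨g, hg, rfl⟩ := t.root
    exact tgt_notMem_hFun (by simp [hd.src_eq_nil hg])
  | succ d ih =>
    obtain ⟨g, hg, rfl⟩ := t.root
    rw [Function.iterate_succ_apply']
    refine tgt_notMem_hFun fun s' hs' => ?_
    obtain ⟨i, rfl⟩ := List.mem_iff_get.mp hs'
    exact ih (hd.child hg i)

theorem iInter_iterate_hFun_subset_S0F : ⋂ d : ℕ, (hFun σ)^[d + 1] Set.univ ⊆ σ.S0F :=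
  fun s hs t hf =>
    let ⟨d, hd⟩ := hf.exists_depthLE
    hd.notMem_iterate_hFun (Set.mem_iInter.mp hs d)

theorem subset_iInter_iterate_hFun {Y : Set σ.Srt} (hY : hFun σ Y = Y) :
    Y ⊆ ⋂ d : ℕ, (hFun σ)^[d + 1] Set.univ :=
  Set.subset_iInter fun d => hFun_monotone.le_iterate_of_map_eq hY (Set.subset_univ Y) (d + 1)

end

/-- `S_0F` is the greatest fixed point of `h`, obtained as the
intersection of the finite iterations of `h` on `S`; moreover every sort having a
finite tree of depth ≤ d is excluded from `h^[d+1] S`. -/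
theorem S0F_gfp (σ : Sig) :
    Monotone (hFun σ) ∧
    hFun σ (Sig.S0F σ) = Sig.S0F σ ∧
    (∀ Y : Set σ.Srt, hFun σ Y = Y → Y ⊆ Sig.S0F σ) ∧
    Sig.S0F σ = ⋂ d : ℕ, (hFun σ)^[d + 1] Set.univ ∧
    ∀ (s : σ.Srt) (d : ℕ) (t : σ.Tree s), t.IsFinite → t.DepthLE d →
      s ∉ (hFun σ)^[d + 1] Set.univ :=
  ⟨hFun_monotone, hFun_S0F,
    fun _ hY => (subset_iInter_iterate_hFun hY).trans iInter_iterate_hFun_subset_S0F,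
    (subset_iInter_iterate_hFun hFun_S0F).antisymm iInter_iterate_hFun_subset_S0F,
    fun _ _ _ _ hd => hd.notMem_iterate_hFun⟩
end

section
/- Assume every sort has at least two generators. Let S_FI ⊆ S be the set of sorts with only finitely many infinite trees, S_0I the set of sorts with no infinite trees, S_1I the set of sorts with exactly one infinite tree, and S_FF the set of sorts with only finitely many finite trees. For each sort s, let F_s^{infin} = { f : s₁ × ⋯ × sₙ → s ∈ F_s | some sᵢ ∉ S_0I } (the generators that can build infinite trees). Define f : P(S) → P(S) by f(X) = X ∪ S_0I ∪ S_1I ∪ { s ∈ S | F_s^{infin} is finite, and every generator g : s₁ × ⋯ × sₙ → s in F_s satisfies: for all i ∈ {1,…,n}, either sᵢ ∈ S_0I, or (sᵢ ∈ X and sⱼ ∈ S_FF ∩ X for all j ≠ i) }. Then f is monotone and S_FI is the least fixed point of f. -/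
set_option linter.unusedVariables false


/-- The generators of sort `s` that can build infinite trees (some argument sort
has an infinite tree). -/
def FinfinI (σ : Sig) (s : σ.Srt) : Set σ.Gen :=
  { g | g ∈ σ.Gens s ∧ ∃ s' ∈ σ.src g, s' ∉ Sig.S0I σ }

/-- The operator `f` whose least fixed point is the set of sorts with only
finitely many infinite trees. -/
def fFI (σ : Sig) (X : Set σ.Srt) : Set σ.Srt :=
  X ∪ Sig.S0I σ ∪ Sig.S1I σ ∪
    { s | (FinfinI σ s).Finite ∧
      ∀ g ∈ σ.Gens s, ∀ (i : ℕ) (si : σ.Srt), (σ.src g)[i]? = some si →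
        (si ∈ Sig.S0I σ ∨ (si ∈ X ∧ ∀ (j : ℕ) (sj : σ.Srt), j ≠ i →
            (σ.src g)[j]? = some sj → sj ∈ Sig.SFF σ ∩ X)) }

/-!
Plugging trees into the argument slots of a generator is injective, and a tree is infinite
iff one of its immediate subtrees is.

`f(S_FI) ⊆ S_FI`: the infinite trees of `s` are covered by those rooted at the finitely many
generators of `F_s^infin`; for such a generator, some subtree ranges over the finitely many
infinite trees of an `S_FI` sort and all other subtrees over the finitely many trees of
`S_FF ∩ S_FI` sorts.

Leastness: let `X` be a prefixed point and `s ∈ S_FI \ X` with the least number `n` of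
infinite trees; `n ≥ 2` since `S_0I ∪ S_1I ⊆ X`. As `s ∉ f(X)`, a generator `g` of `s` has
an argument sort `sᵢ` with infinite trees that violates the condition. Were `g` not unary,
plugging two distinct trees into one slot would give `2 |Inf(sⱼ)| ≤ n` for the sort of every
other slot, putting it in `X` by minimality, and an infinite tree in slot `i` makes the finite
trees of `sⱼ` inject into `Inf(s)`, so `sⱼ ∈ S_FF`: no violation. So `g` is unary, `sᵢ ∉ X`,
`|Inf(sᵢ)| = n`, and `g` maps `Inf(sᵢ)` onto `Inf(s)`. Descending along these unary
generators, any two infinite trees of `s` agree at every position, contradicting `n ≥ 2`.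
-/

namespace Sig

variable {σ : Sig}

def infTrees (s : σ.Srt) : Set (σ.Tree s) := { t | ¬ t.IsFinite }

theorem mem_SFI_iff {s : σ.Srt} : s ∈ σ.SFI ↔ (σ.infTrees s).Finite := Iff.rfl

theorem notMem_S0I_iff {s : σ.Srt} : s ∉ σ.S0I ↔ ∃ t : σ.Tree s, ¬ t.IsFinite := by
  simp [S0I]

namespace Tree

theorem ext {s : σ.Srt} {t t' : σ.Tree s} (h : t.L = t'.L) : t = t' := by
  cases t; cases t'; cases h; rfl

theorem tgt_of_L_nil {s : σ.Srt} (t : σ.Tree s) {g : σ.Gen} (h : t.L [] = some g) :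
    σ.tgt g = s := by
  obtain ⟨g', h', hg'⟩ := t.root
  rw [h, Option.some_inj] at h'
  exact h' ▸ hg'

theorem L_append_eq_none {s : σ.Srt} (t : σ.Tree s) {p : List ℕ} (hp : t.L p = none)
    (q : List ℕ) : t.L (p ++ q) = none := by
  induction q using List.reverseRecOn with
  | nil => simpa using hp
  | append_singleton q a ih => simpa using t.isLab.1 _ ih a

theorem L_cons_eq_none {s : σ.Srt} (t : σ.Tree s) {g : σ.Gen} (h : t.L [] = some g)
    {i : ℕ} (hi : (σ.src g).length ≤ i) (q : List ℕ) : t.L (i :: q) = none := by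
  have hi' : t.L [i] = none := by
    rw [← Option.not_isSome_iff_eq_none]
    simpa using (t.isLab.2.1 [] g h i).not.mpr (by omega)
  simpa using t.L_append_eq_none hi' q

/-- Indexed by `ℕ`, with the sort supplied by `hs'`, so that it can be named without casts. -/
def childAt {s : σ.Srt} (t : σ.Tree s) {g : σ.Gen} (h : t.L [] = some g)
    (i : ℕ) {s' : σ.Srt} (hs' : (σ.src g)[i]? = some s') : σ.Tree s' where
  L p := t.L (i :: p)
  isLab :=
    ⟨fun p hp k => by simpa using t.isLab.1 (i :: p) hp k,
     fun p g' hp k => by simpa using t.isLab.2.1 (i :: p) g' hp k,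
     fun p g' k g'' hp hpk => t.isLab.2.2 (i :: p) g' k g'' hp (by simpa using hpk)⟩
  root := by
    obtain ⟨hi, -⟩ := List.getElem?_eq_some_iff.mp hs'
    obtain ⟨g', hg'⟩ := Option.isSome_iff_exists.mp
      (by simpa using (t.isLab.2.1 [] g h i).mpr hi)
    refine ⟨g', hg', ?_⟩
    have := t.isLab.2.2 [] g i g' h (by simpa using hg')
    rw [hs'] at this
    exact (Option.some_inj.mp this).symm

end Tree

def node {s : σ.Srt} (g : σ.Gen) (hg : σ.tgt g = s)
    (c : ∀ i : Fin (σ.src g).length, σ.Tree ((σ.src g).get i)) : σ.Tree s :=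
  ⟨(σ.build g c).L, (σ.build g c).isLab, g, rfl, hg⟩

section Node

variable {s : σ.Srt} {g : σ.Gen} (hg : σ.tgt g = s)

@[simp]
theorem node_L_nil (c) : (node g hg c).L [] = some g := rfl

theorem node_L_cons (c) (i : Fin (σ.src g).length) (q : List ℕ) :
    (node g hg c).L (i :: q) = (c i).L q := by
  simp [node, build]

theorem Tree.eq_node (t : σ.Tree s) (h : t.L [] = some g) :
    t = node g hg (fun i => t.childAt h i (List.getElem?_eq_getElem i.isLt)) := by
  refine Tree.ext (funext fun p => ?_)
  match p with
  | [] => exact h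
  | i :: q =>
    by_cases hi : i < (σ.src g).length
    · exact (node_L_cons hg (fun i => t.childAt h i _) ⟨i, hi⟩ q).symm
    · rw [t.L_cons_eq_none h (by omega)]
      simp [node, build, hi]

theorem node_injective : Function.Injective (node g hg) := fun c c' h =>
  funext fun i => Tree.ext <| funext fun q => by
    simpa only [node_L_cons] using congrFun (congrArg Tree.L h) (i :: q)

theorem node_isFinite_iff (c) : (node g hg c).IsFinite ↔ ∀ i, (c i).IsFinite := by
  have hsplit : { p | ((node g hg c).L p).isSome } =
      {[]} ∪ ⋃ i : Fin (σ.src g).length, (List.cons (i : ℕ)) '' { p | ((c i).L p).isSome } := by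
    ext p
    match p with
    | [] => simp
    | j :: q =>
      by_cases hj : j < (σ.src g).length
      · simp [node_L_cons hg c ⟨j, hj⟩, Fin.exists_iff, hj]
      · simp [node, build, hj, Fin.exists_iff]
  simp only [Tree.IsFinite, hsplit, Set.finite_union, Set.finite_singleton, true_and]
  refine ⟨fun h i => ?_, fun h => Set.finite_iUnion fun i => (h i).image _⟩
  exact (Set.finite_image_iff List.cons_injective.injOn).mp
    (h.subset (Set.subset_iUnion (fun i : Fin (σ.src g).length =>
      List.cons (i : ℕ) '' { p | ((c i).L p).isSome }) i))

end Node

section Default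

variable (hne : ∀ s : σ.Srt, (σ.Gens s).Nonempty)

noncomputable def defaultL : List ℕ → σ.Srt → Option σ.Gen
  | [], s => some (hne s).choose
  | i :: p, s =>
      if h : i < (σ.src (hne s).choose).length then
        defaultL p ((σ.src (hne s).choose)[i])
      else none

theorem isLabeling_defaultL (s : σ.Srt) : σ.IsLabeling (defaultL hne · s) := by
  refine ⟨fun p => ?_, fun p => ?_, fun p => ?_⟩
  · induction p generalizing s with
    | nil => simp [defaultL]
    | cons a q ih => simp only [defaultL, List.cons_append]; split <;> simp_all
  · induction p generalizing s with
    | nil => simp [defaultL]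
    | cons a q ih => simp only [defaultL, List.cons_append]; split <;> simp_all
  · induction p generalizing s with
    | nil =>
      rintro g i g' ⟨⟩ h
      simp only [defaultL, List.nil_append] at h
      split at h
      · cases h
        exact (List.getElem?_eq_getElem _).trans (congrArg some (hne _).choose_spec.symm)
      · cases h
    | cons a q ih =>
      simp only [defaultL, List.cons_append]
      split
      · exact ih _
      · simp

noncomputable def defaultTree (s : σ.Srt) : σ.Tree s :=
  ⟨(defaultL hne · s), isLabeling_defaultL hne s, (hne s).choose, rfl, (hne s).choose_spec⟩

end Default

theorem nontrivial_tree (htwo : ∀ s : σ.Srt, (σ.Gens s).Nontrivial) (s : σ.Srt) :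
    Nontrivial (σ.Tree s) := by
  obtain ⟨g₁, hg₁, g₂, hg₂, hg₁₂⟩ := htwo s
  let c (g : σ.Gen) (i : Fin (σ.src g).length) :=
    defaultTree (fun s => (htwo s).nonempty) ((σ.src g).get i)
  refine ⟨node g₁ hg₁ (c g₁), node g₂ hg₂ (c g₂), fun h => hg₁₂ ?_⟩
  exact Option.some_inj.mp (congrFun (congrArg Tree.L h) [])

section Counting

variable {s : σ.Srt} {g : σ.Gen} (hg : σ.tgt g = s)
  (b : ∀ i : Fin (σ.src g).length, σ.Tree ((σ.src g).get i))

theorem node_mem_infTrees {c : ∀ i : Fin (σ.src g).length, σ.Tree ((σ.src g).get i)}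
    (i : Fin (σ.src g).length) (hi : c i ∈ σ.infTrees _) : node g hg c ∈ σ.infTrees s :=
  fun h => hi ((node_isFinite_iff hg c).mp h i)

theorem node_update_mem_infTrees {i : Fin (σ.src g).length} {u : σ.Tree ((σ.src g).get i)}
    (hu : u ∈ σ.infTrees _) : node g hg (Function.update b i u) ∈ σ.infTrees s :=
  node_mem_infTrees hg i (by simpa using hu)

theorem node_update_injective (i : Fin (σ.src g).length) :
    Function.Injective fun u => node g hg (Function.update b i u) :=
  (node_injective hg).comp (Function.update_injective b i)

theorem node_update_update_injective {i j : Fin (σ.src g).length} (hij : i ≠ j) :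
    Function.Injective fun p : σ.Tree ((σ.src g).get i) × σ.Tree ((σ.src g).get j) =>
      node g hg (Function.update (Function.update b i p.1) j p.2) := by
  rintro ⟨u, t⟩ ⟨u', t'⟩ h
  have hc := node_injective hg h
  have hi := congrFun hc i
  have hj := congrFun hc j
  simp only [Function.update_self, Function.update_of_ne hij] at hi hj
  exact Prod.ext hi hj

theorem finite_infTrees_src_get (hne : ∀ s : σ.Srt, (σ.Gens s).Nonempty)
    (hs : (σ.infTrees s).Finite) (hg : σ.tgt g = s) (i : Fin (σ.src g).length) :
    (σ.infTrees ((σ.src g).get i)).Finite :=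
  hs.of_injOn (fun _ hu => node_update_mem_infTrees hg (fun _ => defaultTree hne _) hu)
    (node_update_injective hg _ i).injOn

theorem ncard_infTrees_src_get_le (hne : ∀ s : σ.Srt, (σ.Gens s).Nonempty)
    (hs : (σ.infTrees s).Finite) (hg : σ.tgt g = s) (i : Fin (σ.src g).length) :
    (σ.infTrees ((σ.src g).get i)).ncard ≤ (σ.infTrees s).ncard :=
  Set.ncard_le_ncard_of_injOn _
    (fun _ hu => node_update_mem_infTrees hg (fun _ => defaultTree hne _) hu)
    (node_update_injective hg _ i).injOn hs

theorem src_get_mem_SFF (hne : ∀ s : σ.Srt, (σ.Gens s).Nonempty)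
    (hs : (σ.infTrees s).Finite) (hg : σ.tgt g = s) {i j : Fin (σ.src g).length} (hij : i ≠ j)
    (hi : (σ.src g).get i ∉ σ.S0I) : (σ.src g).get j ∈ σ.SFF := by
  obtain ⟨u, hu⟩ := notMem_S0I_iff.mp hi
  refine hs.of_injOn (fun t _ => node_mem_infTrees hg i ?_)
    (node_update_injective hg (Function.update (fun _ => defaultTree hne _) i u) j).injOn
  rwa [Function.update_of_ne hij, Function.update_self]

theorem two_mul_ncard_infTrees_src_get_le (htwo : ∀ s : σ.Srt, (σ.Gens s).Nontrivial)
    (hs : (σ.infTrees s).Finite) (hg : σ.tgt g = s) {i j : Fin (σ.src g).length} (hij : i ≠ j) :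
    2 * (σ.infTrees ((σ.src g).get j)).ncard ≤ (σ.infTrees s).ncard := by
  have := nontrivial_tree htwo ((σ.src g).get i)
  obtain ⟨u₁, u₂, hu⟩ := exists_pair_ne (σ.Tree ((σ.src g).get i))
  rw [← Set.ncard_pair hu, ← Set.ncard_prod]
  exact Set.ncard_le_ncard_of_injOn _
    (fun p hp => node_update_mem_infTrees hg _ (Set.mem_prod.mp hp).2)
    (node_update_update_injective hg
      (fun _ => defaultTree (fun s => (htwo s).nonempty) _) hij).injOn hs

end Counting


theorem Tree.exists_not_isFinite_childAt {s : σ.Srt} (t : σ.Tree s) {g : σ.Gen}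
    (h : t.L [] = some g) (ht : ¬ t.IsFinite) :
    ∃ i : Fin (σ.src g).length,
      ¬ (t.childAt h i (List.getElem?_eq_getElem i.isLt)).IsFinite := by
  rw [t.eq_node (t.tgt_of_L_nil h) h, node_isFinite_iff] at ht
  simpa using ht

theorem finite_FinfinI (hne : ∀ s : σ.Srt, (σ.Gens s).Nonempty) {s : σ.Srt}
    (hs : s ∈ σ.SFI) : (FinfinI σ s).Finite := by
  refine ((hs.image fun t => t.L []).preimage (Option.some_injective _).injOn).subset ?_
  rintro g ⟨hg, s', hs', hs'0⟩
  obtain ⟨i, rfl⟩ := List.mem_iff_get.mp hs'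
  obtain ⟨u, hu⟩ := notMem_S0I_iff.mp hs'0
  exact ⟨_, node_update_mem_infTrees hg (fun _ => defaultTree hne _) hu, rfl⟩

theorem finite_tree_of_mem_SFF_of_mem_SFI {s : σ.Srt} (hF : s ∈ σ.SFF) (hI : s ∈ σ.SFI) :
    Finite (σ.Tree s) :=
  Set.finite_univ_iff.mp ((hF.union hI).subset fun t _ => em t.IsFinite)

theorem finite_infTrees_root_eq {s : σ.Srt} {g : σ.Gen} (hg : σ.tgt g = s)
    (hcond : ∀ (i : ℕ) (si : σ.Srt), (σ.src g)[i]? = some si →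
      (si ∈ σ.S0I ∨ (si ∈ σ.SFI ∧ ∀ (j : ℕ) (sj : σ.Srt), j ≠ i →
        (σ.src g)[j]? = some sj → sj ∈ σ.SFF ∩ σ.SFI))) :
    {t ∈ σ.infTrees s | t.L [] = some g}.Finite := by
  let B (i j : Fin (σ.src g).length) : Set (σ.Tree ((σ.src g).get j)) :=
    if j = i then σ.infTrees _ else Set.univ
  have hcover : {t ∈ σ.infTrees s | t.L [] = some g} ⊆
      ⋃ (i) (_ : (σ.src g).get i ∉ σ.S0I), node g hg '' Set.univ.pi (B i) := by
    rintro t ⟨ht, h⟩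
    obtain ⟨i, hi⟩ := t.exists_not_isFinite_childAt h ht
    refine Set.mem_iUnion₂.mpr ⟨i, notMem_S0I_iff.mpr ⟨_, hi⟩, _,
      fun j _ => ?_, (t.eq_node hg h).symm⟩
    by_cases hji : j = i
    · subst hji; simp only [B, if_pos rfl]; exact hi
    · simp [B, hji]
  refine (Set.finite_iUnion fun i => Set.finite_iUnion fun hi => ?_).subset hcover
  obtain hi0 | ⟨hiI, hsib⟩ := hcond i _ (List.getElem?_eq_getElem i.isLt)
  · exact absurd hi0 hi
  refine (Set.Finite.pi fun j => ?_).image _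
  by_cases hji : j = i
  · subst hji; simp only [B, if_pos rfl]; exact hiI
  · obtain ⟨hF, hI⟩ := hsib j _ (fun h => hji (Fin.ext h)) (List.getElem?_eq_getElem j.isLt)
    have := finite_tree_of_mem_SFF_of_mem_SFI hF hI
    simp only [B, if_neg hji]
    exact Set.finite_univ

theorem mem_SFI_of_cond {s : σ.Srt} (hfin : (FinfinI σ s).Finite)
    (hcond : ∀ g ∈ σ.Gens s, ∀ (i : ℕ) (si : σ.Srt), (σ.src g)[i]? = some si →
      (si ∈ σ.S0I ∨ (si ∈ σ.SFI ∧ ∀ (j : ℕ) (sj : σ.Srt), j ≠ i →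
        (σ.src g)[j]? = some sj → sj ∈ σ.SFF ∩ σ.SFI))) :
    s ∈ σ.SFI := by
  refine (hfin.biUnion fun g hg => finite_infTrees_root_eq hg.1 (hcond g hg.1)).subset ?_
  intro t ht
  obtain ⟨g, h, hg⟩ := t.root
  obtain ⟨i, hi⟩ := t.exists_not_isFinite_childAt h ht
  exact Set.mem_biUnion ⟨hg, _, List.get_mem _ i, notMem_S0I_iff.mpr ⟨_, hi⟩⟩ ⟨ht, h⟩

theorem fFI_monotone : Monotone (fFI σ) := fun X Y hXY =>
  Set.union_subset_union (Set.union_subset_union_left _ (Set.union_subset_union_left _ hXY))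
    fun _ ⟨hfin, hcond⟩ => ⟨hfin, fun g hg i si hsi => (hcond g hg i si hsi).imp_right
      fun ⟨hX, hsib⟩ => ⟨hXY hX, fun j sj hji hsj =>
        ⟨(hsib j sj hji hsj).1, hXY (hsib j sj hji hsj).2⟩⟩⟩

theorem subset_fFI (X : Set σ.Srt) : X ⊆ fFI σ X :=
  fun _ hs => Or.inl (Or.inl (Or.inl hs))

theorem fFI_SFI_subset : fFI σ σ.SFI ⊆ σ.SFI := by
  rintro s (((hs | hs) | ⟨t, -, ht⟩) | ⟨hfin, hcond⟩)
  · exact hs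
  · exact Set.finite_empty.subset fun t ht' => ht' (hs t)
  · exact Set.Subsingleton.finite fun a ha b hb => (ht a ha).trans (ht b hb).symm
  · exact mem_SFI_of_cond hfin hcond

theorem two_le_ncard_infTrees {X : Set σ.Srt} (hX : fFI σ X ⊆ X) {s : σ.Srt}
    (hs : s ∈ σ.SFI) (hsX : s ∉ X) : 2 ≤ (σ.infTrees s).ncard := by
  by_contra! hlt
  obtain h | h : (σ.infTrees s).ncard = 0 ∨ (σ.infTrees s).ncard = 1 := by omega
  · rw [Set.ncard_eq_zero (mem_SFI_iff.mp hs)] at h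
    exact hsX (hX (Or.inl (Or.inl (Or.inr fun t => by_contra fun ht => h.subset ht))))
  · obtain ⟨a, ha⟩ := Set.ncard_eq_one.mp h
    refine hsX (hX (Or.inl (Or.inr ⟨a, ?_, fun t ht => ?_⟩)))
    · exact (ha.symm.subset rfl : a ∈ σ.infTrees s)
    · exact (ha.subset ht : t ∈ ({a} : Set _))

def InfTreesThroughUnary (g : σ.Gen) (s s' : σ.Srt) : Prop :=
  (σ.src g).length = 1 ∧
    ∀ t ∈ σ.infTrees s, t.L [] = some g ∧ ∃ t' ∈ σ.infTrees s', ∀ q, t.L (0 :: q) = t'.L q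

theorem subsingleton_infTrees_of_forall_unary (M : Set σ.Srt)
    (hM : ∀ s ∈ M, ∃ g, ∃ s' ∈ M, InfTreesThroughUnary g s s') {s : σ.Srt} (hs : s ∈ M) :
    (σ.infTrees s).Subsingleton := by
  suffices h : ∀ p, ∀ s ∈ M, ∀ t₁ ∈ σ.infTrees s, ∀ t₂ ∈ σ.infTrees s, t₁.L p = t₂.L p from
    fun t₁ h₁ t₂ h₂ => Tree.ext (funext fun p => h p s hs t₁ h₁ t₂ h₂)
  intro p
  induction p with
  | nil =>
    intro s hs t₁ h₁ t₂ h₂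
    obtain ⟨g, s', -, -, hg⟩ := hM s hs
    rw [(hg t₁ h₁).1, (hg t₂ h₂).1]
  | cons a q ih =>
    intro s hs t₁ h₁ t₂ h₂
    obtain ⟨g, s', hs', hlen, hg⟩ := hM s hs
    obtain ⟨hr₁, t₁', h₁', e₁⟩ := hg t₁ h₁
    obtain ⟨hr₂, t₂', h₂', e₂⟩ := hg t₂ h₂
    cases a with
    | zero => rw [e₁, e₂, ih s' hs' t₁' h₁' t₂' h₂']
    | succ a => rw [t₁.L_cons_eq_none hr₁ (by omega), t₂.L_cons_eq_none hr₂ (by omega)]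

theorem image_node_update_eq_infTrees {s : σ.Srt} {g : σ.Gen} (hs : (σ.infTrees s).Finite)
    (hg : σ.tgt g = s) (b : ∀ i : Fin (σ.src g).length, σ.Tree ((σ.src g).get i))
    (i : Fin (σ.src g).length)
    (hcard : (σ.infTrees s).ncard ≤ (σ.infTrees ((σ.src g).get i)).ncard) :
    (fun u => node g hg (Function.update b i u)) '' σ.infTrees _ = σ.infTrees s :=
  Set.eq_of_subset_of_ncard_le
    (Set.image_subset_iff.mpr fun _ hu => node_update_mem_infTrees hg b hu)
    (by rwa [Set.ncard_image_of_injective _ (node_update_injective hg b i)]) hs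

theorem exists_infTreesThroughUnary_of_minimal (htwo : ∀ s : σ.Srt, (σ.Gens s).Nontrivial)
    {X : Set σ.Srt} (hX : fFI σ X ⊆ X) {n : ℕ} (hn : 0 < n)
    (hmin : ∀ s ∈ σ.SFI, s ∉ X → n ≤ (σ.infTrees s).ncard)
    {s : σ.Srt} (hs : s ∈ σ.SFI) (hsX : s ∉ X) (hcard : (σ.infTrees s).ncard = n) :
    ∃ g, ∃ s' ∈ {s' | s' ∈ σ.SFI ∧ s' ∉ X ∧ (σ.infTrees s').ncard = n},
      InfTreesThroughUnary g s s' := by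
  have hne s := (htwo s).nonempty
  have hfail : ¬ ∀ g ∈ σ.Gens s, ∀ (i : ℕ) (si : σ.Srt), (σ.src g)[i]? = some si →
      (si ∈ σ.S0I ∨ (si ∈ X ∧ ∀ (j : ℕ) (sj : σ.Srt), j ≠ i →
        (σ.src g)[j]? = some sj → sj ∈ σ.SFF ∩ X)) :=
    fun h => hsX (hX (Or.inr ⟨finite_FinfinI hne hs, h⟩))
  push Not at hfail
  obtain ⟨g, hg, i, si, hsi, hsi0, hfail⟩ := hfail
  obtain ⟨hi, rfl⟩ := List.getElem?_eq_some_iff.mp hsi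
  have hmemX (j k : Fin (σ.src g).length) (hjk : j ≠ k) : (σ.src g).get k ∈ X := by
    by_contra hkX
    have h2 := two_mul_ncard_infTrees_src_get_le htwo hs hg hjk
    have := hmin _ (finite_infTrees_src_get hne hs hg k) hkX
    omega
  have hlen : (σ.src g).length = 1 := by
    by_contra hlen
    have : Nontrivial (Fin (σ.src g).length) := Fin.nontrivial_iff_two_le.mpr (by omega)
    obtain ⟨k, hk⟩ := exists_ne (⟨i, hi⟩ : Fin (σ.src g).length)
    obtain ⟨j, sj, hji, hsj, hsj'⟩ := hfail (hmemX k ⟨i, hi⟩ hk)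
    obtain ⟨hj, rfl⟩ := List.getElem?_eq_some_iff.mp hsj
    have hij : (⟨i, hi⟩ : Fin _) ≠ ⟨j, hj⟩ := fun h => hji (congrArg Fin.val h).symm
    exact hsj' ⟨src_get_mem_SFF hne hs hg hij hsi0, hmemX _ _ hij⟩
  obtain rfl : i = 0 := by omega
  have hsiX : (σ.src g)[0] ∉ X := fun h => by
    obtain ⟨j, sj, hj0, hsj, -⟩ := hfail h
    obtain ⟨hj, -⟩ := List.getElem?_eq_some_iff.mp hsj
    omega
  have hsiI := finite_infTrees_src_get hne hs hg ⟨0, hi⟩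
  have hcard' : (σ.infTrees (σ.src g)[0]).ncard = n :=
    le_antisymm (hcard ▸ ncard_infTrees_src_get_le hne hs hg ⟨0, hi⟩) (hmin _ hsiI hsiX)
  refine ⟨g, _, ⟨hsiI, hsiX, hcard'⟩, hlen, fun t ht => ?_⟩
  rw [← image_node_update_eq_infTrees hs hg (fun _ => defaultTree hne _) ⟨0, hi⟩
    (hcard.trans hcard'.symm).le] at ht
  obtain ⟨u, hu, rfl⟩ := ht
  exact ⟨rfl, u, hu, fun q => by simp [node_L_cons hg _ ⟨0, hi⟩]⟩

theorem SFI_subset_of_fFI_subset (htwo : ∀ s : σ.Srt, (σ.Gens s).Nontrivial)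
    {X : Set σ.Srt} (hX : fFI σ X ⊆ X) : σ.SFI ⊆ X := by
  classical
  by_contra hsub
  obtain ⟨s₀, hs₀, hs₀X⟩ := Set.not_subset.mp hsub
  have hex : ∃ n, ∃ s ∈ σ.SFI, s ∉ X ∧ (σ.infTrees s).ncard = n := ⟨_, s₀, hs₀, hs₀X, rfl⟩
  obtain ⟨s, hs, hsX, hcard⟩ := Nat.find_spec hex
  have hmin (s : σ.Srt) (hs : s ∈ σ.SFI) (hsX : s ∉ X) : Nat.find hex ≤ (σ.infTrees s).ncard :=
    Nat.find_min' hex ⟨s, hs, hsX, rfl⟩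
  have h2 := two_le_ncard_infTrees hX hs hsX
  have hsing := subsingleton_infTrees_of_forall_unary
    {s | s ∈ σ.SFI ∧ s ∉ X ∧ (σ.infTrees s).ncard = Nat.find hex}
    (fun s ⟨hs, hsX, hcard⟩ =>
      exists_infTreesThroughUnary_of_minimal htwo hX (by omega) hmin hs hsX hcard)
    ⟨hs, hsX, hcard⟩
  have := (Set.ncard_le_one (mem_SFI_iff.mp hs)).mpr hsing
  omega

end Sig

/-- Assuming every sort has at least two generators, `f` is
monotone and `S_FI` (the sorts with only finitely many infinite trees) is its
least fixed point. -/
theorem SFI_lfp (σ : Sig) (htwo : ∀ s : σ.Srt, (σ.Gens s).Nontrivial) :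
    Monotone (fFI σ) ∧
    fFI σ (Sig.SFI σ) = Sig.SFI σ ∧
    (∀ X : Set σ.Srt, fFI σ X = X → Sig.SFI σ ⊆ X) :=
  ⟨Sig.fFI_monotone, Sig.fFI_SFI_subset.antisymm (Sig.subset_fFI _),
    fun _ hX => Sig.SFI_subset_of_fFI_subset htwo hX.subset⟩
end

section
/- Let v be a variable of sort s such that s has infinitely many trees (i.e. s ∉ S_FF ∩ S_FI). Let β₁,…,β_m be solved basic formulae in each of which v is properly reachable from itself, and let T be a finite set of trees of sort s. Then there exists a tree v* of sort s with v* ∉ T such that in the structure 𝒯 of trees, every valuation assigning v* to v falsifies every βᵢ. Moreover v* can be chosen to be a finite tree if s ∉ S_FF, and an infinite tree if s ∉ S_FI. -/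
set_option linter.unusedVariables false


namespace Sig

variable (σ : Sig)

variable {σ}

variable (σ)

variable {σ}

variable (σ)

variable {σ}

variable (σ)

/-- A basic formula: a conjunction of equations `v = t` (with `t` a flat term)
and finiteness constraints `fin(u)`, represented by the list of equations
(a sort, the left-hand-side variable, the right-hand-side term) and the list of
`fin`-variables. -/
structure Basic where
  eqs : List ((s : σ.Srt) × ℕ × σ.Tm s)
  fins : List ((s : σ.Srt) × ℕ)

variable {σ}

/-- Well-formedness of a basic formula: all right-hand sides are flat. -/
def Basic.WF (β : σ.Basic) : Prop := ∀ e ∈ β.eqs, (e.2.2).IsFlat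

/-- Satisfaction of a basic formula under a valuation. -/
def Basic.Sat (β : σ.Basic) (ρ : σ.Val) : Prop :=
  (∀ e ∈ β.eqs, ρ e.1 e.2.1 = (e.2.2).eval ρ) ∧
  (∀ u ∈ β.fins, (ρ u.1 u.2).IsFinite)

/-- The variables occurring in a basic formula. -/
def Basic.vars (β : σ.Basic) : Set ((s : σ.Srt) × ℕ) :=
  { x | (∃ e ∈ β.eqs, (⟨e.1, e.2.1⟩ : (s : σ.Srt) × ℕ) = x ∨ x ∈ (e.2.2).fv) ∨ x ∈ β.fins }

/-- One step of reachability: `y` occurs in the right-hand side of an equation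
whose left-hand side is `x`. -/
def Basic.step (β : σ.Basic) (x y : (s : σ.Srt) × ℕ) : Prop :=
  ∃ e ∈ β.eqs, (⟨e.1, e.2.1⟩ : (s : σ.Srt) × ℕ) = x ∧ y ∈ (e.2.2).fv

/-- `y` is reachable from `x` (by a chain of equations, possibly empty). -/
def Basic.Reach (β : σ.Basic) (x y : (s : σ.Srt) × ℕ) : Prop :=
  Relation.ReflTransGen β.step x y

/-- `y` is properly reachable from `x` (by a nonempty chain of equations). -/
def Basic.ProperReach (β : σ.Basic) (x y : (s : σ.Srt) × ℕ) : Prop :=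
  Relation.TransGen β.step x y

open Classical in
/-- The index of an element in a list (used to compare variables in a given ordering). -/
noncomputable def idx {A : Type*} (vs : List A) (x : A) : ℕ :=
  vs.findIdx fun y => decide (y = x)

/-- `x` is smaller than `y` in the variable ordering given by the list `vs`. -/
noncomputable def ltv {A : Type*} (vs : List A) (x y : A) : Prop :=
  idx vs x < idx vs y

/-- A basic formula is solved with respect to the variable ordering `vs`:
(1) the left-hand-side variables of equations and the `fin`-variables are
pairwise distinct and every equation `x = y` between variables has `x > y`;
(2) `fin(v)` occurs only if the sort of `v` has both finite and infinite trees. -/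
noncomputable def Solved (vs : List ((s : σ.Srt) × ℕ)) (β : σ.Basic) : Prop :=
  ((β.eqs.map fun e => (⟨e.1, e.2.1⟩ : (s : σ.Srt) × ℕ)) ++ β.fins).Nodup ∧
  (∀ e ∈ β.eqs, ∀ n : ℕ, e.2.2 = Sig.Tm.var e.1 n →
      ltv vs (⟨e.1, n⟩ : (s : σ.Srt) × ℕ) ⟨e.1, e.2.1⟩) ∧
  (∀ u ∈ β.fins, (∃ t : σ.Tree u.1, t.IsFinite) ∧ (∃ t : σ.Tree u.1, ¬ t.IsFinite))

/-- `ρ'` agrees with `ρ` outside the set `V` of variables. -/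
def AgreesOff (ρ ρ' : σ.Val) (V : Set ((s : σ.Srt) × ℕ)) : Prop :=
  ∀ (s : σ.Srt) (n : ℕ), (⟨s, n⟩ : (s : σ.Srt) × ℕ) ∉ V → ρ' s n = ρ s n

variable (σ)

/-- A normal formula of depth at most 2,
`¬(∃x̄. α ∧ ⋀ᵢ ¬(∃ȳᵢ. βᵢ))`, given by the bound variables `x̄`,
the basic formula `α` and the list of pairs `(ȳᵢ, βᵢ)`. -/
structure NF2 where
  xs : List ((s : σ.Srt) × ℕ)
  base : σ.Basic
  inner : List (List ((s : σ.Srt) × ℕ) × σ.Basic)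

variable {σ}

/-- Well-formedness of the basic subformulae of a normal formula of depth ≤ 2. -/
def NF2.WF (φ : σ.NF2) : Prop := φ.base.WF ∧ ∀ p ∈ φ.inner, (p.2).WF

/-- Satisfaction of the inner part `∃x̄. α ∧ ⋀ᵢ ¬(∃ȳᵢ. βᵢ)` of a normal formula
of depth ≤ 2 (this is the shape of a fully simplified formula). -/
def NF2.PosSat (φ : σ.NF2) (ρ : σ.Val) : Prop :=
  ∃ ρ₁ : σ.Val, AgreesOff ρ ρ₁ { x | x ∈ φ.xs } ∧ φ.base.Sat ρ₁ ∧
    ∀ p ∈ φ.inner, ¬ ∃ ρ₂ : σ.Val, AgreesOff ρ₁ ρ₂ { x | x ∈ p.1 } ∧ (p.2).Sat ρ₂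

/-- Satisfaction of a normal formula `¬(∃x̄. α ∧ ⋀ᵢ ¬(∃ȳᵢ. βᵢ))` of depth ≤ 2. -/
def NF2.Sat (φ : σ.NF2) (ρ : σ.Val) : Prop := ¬ φ.PosSat ρ

/-- The free variables of a normal formula of depth ≤ 2. -/
def NF2.fv (φ : σ.NF2) : Set ((s : σ.Srt) × ℕ) :=
  (φ.base.vars \ { x | x ∈ φ.xs }) ∪
    { x | ∃ p ∈ φ.inner, x ∈ (p.2).vars ∧ x ∉ φ.xs ∧ x ∉ p.1 }

/-- All variables occurring (bound or free) in a normal formula of depth ≤ 2. -/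
def NF2.allVars (φ : σ.NF2) : Set ((s : σ.Srt) × ℕ) :=
  φ.base.vars ∪ { x | x ∈ φ.xs } ∪ { x | ∃ p ∈ φ.inner, x ∈ p.1 ∨ x ∈ (p.2).vars }

open Classical in
/-- `β` with all conjuncts also occurring in `α` removed (written `β*`). -/
noncomputable def bstar (α β : σ.Basic) : σ.Basic where
  eqs := β.eqs.filter fun e => decide (e ∉ α.eqs)
  fins := β.fins.filter fun u => decide (u ∉ α.fins)

/-- `β` contains an equation `u = f(w̄)`. -/
def HasEqApp (β : σ.Basic) (u : (s : σ.Srt) × ℕ) : Prop :=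
  ∃ e ∈ β.eqs, (⟨e.1, e.2.1⟩ : (s : σ.Srt) × ℕ) = u ∧ (e.2.2).IsApp

/-- `α` contains an equation with left-hand side `u`. -/
def HasLhs (α : σ.Basic) (u : (s : σ.Srt) × ℕ) : Prop :=
  ∃ e ∈ α.eqs, (⟨e.1, e.2.1⟩ : (s : σ.Srt) × ℕ) = u

/-- Definition of an instantiable variable of a normal formula
`¬(∃x̄. α ∧ ⋀ᵢ ¬(∃ȳᵢ. βᵢ))` of depth at most 2 (Definition of the paper):
`u` is free or among `x̄` and one of the four conditions holds. -/
def NF2.Instantiable (φ : σ.NF2) (u : (s : σ.Srt) × ℕ) : Prop :=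
  (u ∈ φ.fv ∨ u ∈ φ.xs) ∧
  ( ((σ.Gens u.1).Finite ∧ ∃ p ∈ φ.inner,
        HasEqApp (bstar φ.base p.2) u ∧ ¬ (p.2).ProperReach u u)
  ∨ (u.1 ∈ σ.SFF ∩ σ.SFI ∧ (∃ p ∈ φ.inner, u ∈ (bstar φ.base p.2).vars) ∧
        ¬ HasLhs φ.base u)
  ∨ (u.1 ∈ σ.SFF ∧ u ∈ φ.base.fins ∧ ∃ p ∈ φ.inner, u ∈ (bstar φ.base p.2).vars)
  ∨ (u.1 ∈ σ.SFI ∧ ∃ p ∈ φ.inner,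
        (bstar φ.base p.2).eqs = [] ∧ u ∈ (bstar φ.base p.2).fins) )

/-- A normal formula of depth at most 2 is solved (conditions (1)–(5) of the paper):
its basic subformulae are solved with respect to an ordering compatible with binding
depth, the equations of `α` are included in each `βᵢ`, each `βᵢ` has a conjunct not
in `α`, no variable is instantiable, and all bound variables are reachable from
the free variables of the respective subformula. -/
noncomputable def NF2.IsSolved (φ : σ.NF2) : Prop :=
  (∃ vs : List ((s : σ.Srt) × ℕ), vs.Nodup ∧
    (∀ x ∈ φ.allVars, x ∈ vs) ∧
    (∀ a ∈ φ.fv, ∀ b ∈ φ.xs, ltv vs a b) ∧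
    (∀ p ∈ φ.inner, ∀ b ∈ φ.xs, ∀ c ∈ p.1, ltv vs b c) ∧
    (∀ p ∈ φ.inner, ∀ a ∈ φ.fv, ∀ c ∈ p.1, ltv vs a c) ∧
    Solved vs φ.base ∧ ∀ p ∈ φ.inner, Solved vs p.2) ∧
  (∀ p ∈ φ.inner, ∀ e ∈ φ.base.eqs, e ∈ (p.2).eqs) ∧
  (∀ p ∈ φ.inner, (∃ e ∈ (p.2).eqs, e ∉ φ.base.eqs) ∨ (∃ u ∈ (p.2).fins, u ∉ φ.base.fins)) ∧
  (∀ u : (s : σ.Srt) × ℕ, ¬ φ.Instantiable u) ∧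
  (∀ x ∈ φ.xs, ∃ v, v ∈ φ.base.vars ∧ v ∉ φ.xs ∧ φ.base.Reach v x) ∧
  (∀ p ∈ φ.inner, ∀ y ∈ p.1, ∃ v, v ∈ (p.2).vars ∧ v ∉ p.1 ∧ (p.2).Reach v y)

end Sig

/-!
Along a proper cycle from `v` to itself, the equations of a solved basic formula `β` exhibit the
value of `v` as its own subtree at a nonempty position `p` (a cycle of variable equations alone
is impossible, since those strictly decrease in the variable order). A tree with such a period
is infinite, so every finite tree falsifies `β`.

For infinite trees one shows, by induction on the finitely many periods, that infinitely many
infinite trees avoid all of them. If some tree `t₀` avoiding the earlier periods has period `p`,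
graft an arbitrary infinite tree `u ≠ t₀` into `t₀` at a power of `p` longer than the witnesses
of aperiodicity of `t₀`: the result keeps those witnesses, and it is `p`-periodic only if
`u = t₀`.
-/

namespace Sig

variable {σ : Sig} {s s' : σ.Srt}

namespace Tree

lemma ext_L {t u : σ.Tree s} (h : t.L = u.L) : t = u := by
  cases t; cases u; cases h; rfl

lemma isSome_L_nil (t : σ.Tree s) : (t.L []).isSome := by
  obtain ⟨g, hg, -⟩ := t.root
  simp [hg]

def IsSubtreeAt (t : σ.Tree s) (p : List ℕ) (u : σ.Tree s') : Prop :=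
  ∀ q, t.L (p ++ q) = u.L q

lemma IsSubtreeAt.trans {s'' : σ.Srt} {t : σ.Tree s} {u : σ.Tree s'} {w : σ.Tree s''}
    {p p' : List ℕ} (h : t.IsSubtreeAt p u) (h' : u.IsSubtreeAt p' w) :
    t.IsSubtreeAt (p ++ p') w := fun q => by
  rw [List.append_assoc, h, h']

lemma IsSubtreeAt.isFinite {t : σ.Tree s} {u : σ.Tree s'} {p : List ℕ}
    (h : t.IsSubtreeAt p u) (ht : t.IsFinite) : u.IsFinite := by
  have hinj : Set.InjOn (p ++ ·) ((p ++ ·) ⁻¹' {q | (t.L q).isSome}) :=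
    fun _ _ _ _ hab => List.append_cancel_left hab
  refine (ht.preimage hinj).subset fun r hr => ?_
  simpa [h r] using hr

def Periodic (t : σ.Tree s) (p : List ℕ) : Prop := t.IsSubtreeAt p t

lemma Periodic.flatten_replicate {t : σ.Tree s} {p : List ℕ} (h : t.Periodic p) (k : ℕ) :
    t.Periodic (List.replicate k p).flatten := by
  induction k with
  | zero => exact fun _ => rfl
  | succ k ih => rw [List.replicate_succ, List.flatten_cons]; exact h.trans ih

lemma Periodic.not_isFinite {t : σ.Tree s} {p : List ℕ} (hp : p ≠ []) (h : t.Periodic p) :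
    ¬ t.IsFinite := by
  refine Set.infinite_of_injective_forall_mem (f := fun k => (List.replicate k p).flatten)
    (fun a b hab => ?_) (fun k => ?_)
  · have := congrArg List.length hab
    simp only [List.length_flatten, List.map_replicate, List.sum_replicate, smul_eq_mul] at this
    exact Nat.eq_of_mul_eq_mul_right (List.length_pos_iff.mpr hp) this
  · simpa [← h.flatten_replicate k []] using t.isSome_L_nil

lemma Periodic.eq_of_eqOn {t u : σ.Tree s} {d : List ℕ} (hd : d ≠ []) (ht : t.Periodic d)
    (hu : u.Periodic d) (h : ∀ q, ¬ d <+: q → t.L q = u.L q) : t = u := by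
  refine ext_L (funext fun q => ?_)
  induction hq : q.length using Nat.strong_induction_on generalizing q with
  | _ m ih =>
    by_cases hdq : d <+: q
    · obtain ⟨r, rfl⟩ := hdq
      rw [ht r, hu r]
      have : 0 < d.length := List.length_pos_iff.mpr hd
      exact ih r.length (by rw [List.length_append] at hq; omega) r rfl
    · exact h q hdq

section Graft

variable (t : σ.Tree s) (d : List ℕ) (u : σ.Tree s')

lemma isLabeling_graft (hd : ∃ g, t.L d = some g ∧ σ.tgt g = s') :
    σ.IsLabeling fun q => if d <+: q then u.L (q.drop d.length) else t.L q := by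
  obtain ⟨g₀, hg₀, hg₀s⟩ := hd
  obtain ⟨g₁, hg₁, hg₁s⟩ := u.root
  -- An edge `q → q ++ [i]` lies inside `u`, enters the root of `u`, or lies inside `t`.
  have hsplit : ∀ q i, d <+: q ∨ (¬ d <+: q ∧ q ++ [i] = d) ∨
      (¬ d <+: q ∧ ¬ d <+: q ++ [i]) := by
    intro q i
    by_cases h : d <+: q ++ [i]
    · rcases List.prefix_concat_iff.mp h with h | h
      · by_cases hq : d <+: q
        exacts [.inl hq, .inr (.inl ⟨hq, h.symm⟩)]
      · exact .inl h
    · exact .inr (.inr ⟨fun hq => h (hq.trans (List.prefix_append q [i])), h⟩)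
  have drop_snoc : ∀ q i, d <+: q → (q ++ [i]).drop d.length = q.drop d.length ++ [i] :=
    fun q i hq => List.drop_append_of_le_length hq.length_le
  refine ⟨fun q hq i => ?_, fun q g hq i => ?_, fun q g i g' hq hqi => ?_⟩ <;>
    rcases hsplit q i with hdq | ⟨hdq, rfl⟩ | ⟨hdq, hdqi⟩
  · simp only [hdq, hdq.trans (List.prefix_append q [i]), if_true, drop_snoc q i hdq] at hq ⊢
    exact u.isLab.1 _ hq i
  · simp only [hdq, if_false] at hq
    simp [t.isLab.1 q hq i] at hg₀
  · simp only [hdq, hdqi, if_false] at hq ⊢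
    exact t.isLab.1 q hq i
  · simp only [hdq, hdq.trans (List.prefix_append q [i]), if_true, drop_snoc q i hdq] at hq ⊢
    exact u.isLab.2.1 _ g hq i
  · simp only [hdq, if_false, List.prefix_refl, if_true, List.drop_length] at hq ⊢
    simpa [hg₀, hg₁] using t.isLab.2.1 q g hq i
  · simp only [hdq, hdqi, if_false] at hq ⊢
    exact t.isLab.2.1 q g hq i
  · simp only [hdq, hdq.trans (List.prefix_append q [i]), if_true, drop_snoc q i hdq] at hq hqi
    exact u.isLab.2.2 _ g i g' hq hqi
  · simp only [hdq, if_false, List.prefix_refl, if_true, List.drop_length, hg₁,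
      Option.some.injEq] at hq hqi
    rw [t.isLab.2.2 q g i g₀ hq hg₀, hg₀s, ← hqi, hg₁s]
  · simp only [hdq, hdqi, if_false] at hq hqi
    exact t.isLab.2.2 q g i g' hq hqi

def graft (hd : ∃ g, t.L d = some g ∧ σ.tgt g = s') : σ.Tree s where
  L q := if d <+: q then u.L (q.drop d.length) else t.L q
  isLab := isLabeling_graft t d u hd
  root := by
    obtain ⟨g, hg, hgs⟩ := t.root
    by_cases hd₀ : d = []
    · subst hd₀
      obtain ⟨g₀, hg₀, hg₀s⟩ := hd
      obtain ⟨g₁, hg₁, hg₁s⟩ := u.root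
      rw [hg, Option.some.injEq] at hg₀
      exact ⟨g₁, by simp [hg₁], by rw [hg₁s, ← hg₀s, ← hg₀, hgs]⟩
    · exact ⟨g, by simp [List.prefix_nil, hd₀, hg], hgs⟩

variable {t d u} {hd : ∃ g, t.L d = some g ∧ σ.tgt g = s'}

lemma isSubtreeAt_graft : (t.graft d u hd).IsSubtreeAt d u := fun r => by
  simp [graft]

lemma graft_L_of_not_prefix {q : List ℕ} (hq : ¬ d <+: q) : (t.graft d u hd).L q = t.L q := by
  simp [graft, hq]

lemma graft_L_of_length_lt {q : List ℕ} (hq : q.length < d.length) :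
    (t.graft d u hd).L q = t.L q :=
  graft_L_of_not_prefix fun h => by have := h.length_le; omega

lemma not_periodic_graft_of_lt {q r : List ℕ} (hr : t.L (q ++ r) ≠ t.L r)
    (hlen : (q ++ r).length < d.length) : ¬ (t.graft d u hd).Periodic q := fun h => by
  have hr_len : r.length < d.length := by rw [List.length_append] at hlen; omega
  rw [← graft_L_of_length_lt (hd := hd) hlen, ← graft_L_of_length_lt (hd := hd) hr_len,
    h r] at hr
  exact hr rfl

lemma not_periodic_graft_of_ne {u : σ.Tree s} {hd : ∃ g, t.L d = some g ∧ σ.tgt g = s}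
    (hd₀ : d ≠ []) (ht : t.Periodic d) (hu : u ≠ t) : ¬ (t.graft d u hd).Periodic d := by
  intro h
  have heq : t.graft d u hd = t := h.eq_of_eqOn hd₀ ht fun q hq => graft_L_of_not_prefix hq
  refine hu (ext_L (funext fun r => ?_))
  rw [← isSubtreeAt_graft (hd := hd) r, heq, ht r]

end Graft

lemma infinite_setOf_aperiodic_cons (hinf : {t : σ.Tree s | ¬ t.IsFinite}.Infinite)
    {t₀ : σ.Tree s} {p : List ℕ} {P : List (List ℕ)} (hp : p ≠ [])
    (ht₀ : t₀.Periodic p) (hP : ∀ q ∈ P, ¬ t₀.Periodic q) :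
    {t : σ.Tree s | ¬ t.IsFinite ∧ ∀ q ∈ p :: P, ¬ t.Periodic q}.Infinite := by
  have hwit : ∀ q ∈ P, ∃ r, t₀.L (q ++ r) ≠ t₀.L r := fun q hq => by
    simpa [Periodic, IsSubtreeAt] using hP q hq
  choose! r hr using hwit
  set B := (P.map fun q => (q ++ r q).length).sum
  set d := (List.replicate (B + 1) p).flatten
  have hdt : t₀.Periodic d := ht₀.flatten_replicate _
  have hlen : B < d.length := by
    have : 0 < p.length := List.length_pos_iff.mpr hp
    simp only [d, List.length_flatten, List.map_replicate, List.sum_replicate, smul_eq_mul]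
    nlinarith
  have hd₀ : d ≠ [] := List.ne_nil_of_length_pos (by omega)
  have hd : ∃ g, t₀.L d = some g ∧ σ.tgt g = s := by
    rw [← List.append_nil d, hdt []]
    exact t₀.root
  have hinj : Function.Injective fun u => t₀.graft d u hd := fun u v huv =>
    ext_L (funext fun q => by
      rw [← isSubtreeAt_graft (hd := hd) q, ← isSubtreeAt_graft (hd := hd) q]
      exact congrArg (fun w : σ.Tree s => w.L (d ++ q)) huv)
  refine ((hinf.sdiff (Set.finite_singleton t₀)).image hinj.injOn).mono ?_
  rintro _ ⟨u, ⟨hu, hne⟩, rfl⟩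
  refine ⟨fun hfin => hu (isSubtreeAt_graft.isFinite hfin), ?_⟩
  rintro q (_ | ⟨_, hq⟩)
  · exact fun h => not_periodic_graft_of_ne hd₀ hdt hne (h.flatten_replicate _)
  · refine not_periodic_graft_of_lt (hr q hq) (lt_of_le_of_lt ?_ hlen)
    exact List.le_sum_of_mem (List.mem_map_of_mem hq)

lemma infinite_setOf_aperiodic (hinf : {t : σ.Tree s | ¬ t.IsFinite}.Infinite)
    (P : List (List ℕ)) (hP : ∀ p ∈ P, p ≠ []) :
    {t : σ.Tree s | ¬ t.IsFinite ∧ ∀ p ∈ P, ¬ t.Periodic p}.Infinite := by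
  induction P with
  | nil => simpa using hinf
  | cons p P ih =>
    have ih := ih fun q hq => hP q (List.mem_cons_of_mem p hq)
    by_cases h : ∃ t₀ : σ.Tree s, t₀.Periodic p ∧ ∀ q ∈ P, ¬ t₀.Periodic q
    · obtain ⟨t₀, ht₀, hP'⟩ := h
      exact infinite_setOf_aperiodic_cons hinf (hP p List.mem_cons_self) ht₀ hP'
    · refine ih.mono ?_
      rintro t ⟨hfin, ht⟩
      refine ⟨hfin, ?_⟩
      rintro q (_ | ⟨_, hq⟩)
      exacts [fun hp => h ⟨t, hp, ht⟩, ht q hq]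

end Tree

lemma build_isSubtreeAt (g : σ.Gen) (c : ∀ i : Fin (σ.src g).length, σ.Tree ((σ.src g).get i))
    (i : Fin (σ.src g).length) : (σ.build g c).IsSubtreeAt [i.1] (c i) := fun q => by
  show (if h : i.1 < (σ.src g).length then (c ⟨i.1, h⟩).L q else none) = (c i).L q
  rw [dif_pos i.isLt]

namespace Basic

variable {β : σ.Basic} {vs : List ((s : σ.Srt) × ℕ)}

lemma exists_isSubtreeAt_of_step (hwf : β.WF) (hsol : Solved vs β) {x y : (s : σ.Srt) × ℕ}
    (h : β.step x y) :
    ∃ p : List ℕ, (∀ ρ : σ.Val, β.Sat ρ → (ρ x.1 x.2).IsSubtreeAt p (ρ y.1 y.2)) ∧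
      (p = [] → ltv vs y x) := by
  obtain ⟨⟨s₁, n₁, tm⟩, he, rfl, hy⟩ := h
  cases tm with
  | var s₁ n' =>
    obtain rfl : y = ⟨s₁, n'⟩ := by simpa [Tm.fv] using hy
    refine ⟨[], fun ρ hρ q => ?_, fun _ => hsol.2.1 _ he n' rfl⟩
    rw [List.nil_append, hρ.1 _ he, Tm.eval]
  | app g args =>
    obtain ⟨i, hi⟩ := Set.mem_iUnion.mp hy
    obtain ⟨n', hn'⟩ := hwf _ he i
    obtain rfl : y = ⟨(σ.src g).get i, n'⟩ := by simpa [hn', Tm.fv] using hi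
    refine ⟨[i.1], fun ρ hρ q => ?_, fun h => absurd h (List.cons_ne_nil _ _)⟩
    rw [hρ.1 _ he, Tm.eval, build_isSubtreeAt, hn', Tm.eval]

lemma exists_isSubtreeAt_of_properReach (hwf : β.WF) (hsol : Solved vs β)
    {x y : (s : σ.Srt) × ℕ} (h : β.ProperReach x y) :
    ∃ p : List ℕ, (∀ ρ : σ.Val, β.Sat ρ → (ρ x.1 x.2).IsSubtreeAt p (ρ y.1 y.2)) ∧
      (p = [] → ltv vs y x) := by
  induction h with
  | single hstep => exact exists_isSubtreeAt_of_step hwf hsol hstep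
  | tail _ hstep ih =>
    obtain ⟨p₁, hp₁, hl₁⟩ := ih
    obtain ⟨p₂, hp₂, hl₂⟩ := exists_isSubtreeAt_of_step hwf hsol hstep
    refine ⟨p₁ ++ p₂, fun ρ hρ => (hp₁ ρ hρ).trans (hp₂ ρ hρ), fun h => ?_⟩
    obtain ⟨h₁, h₂⟩ := List.append_eq_nil_iff.mp h
    exact lt_trans (hl₂ h₂) (hl₁ h₁)

lemma exists_periodic_of_properReach (hwf : β.WF) (hsol : Solved vs β) {s : σ.Srt} {n : ℕ}
    (h : β.ProperReach ⟨s, n⟩ ⟨s, n⟩) :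
    ∃ p : List ℕ, p ≠ [] ∧ ∀ ρ : σ.Val, β.Sat ρ → (ρ s n).Periodic p := by
  obtain ⟨p, hp, hl⟩ := exists_isSubtreeAt_of_properReach hwf hsol h
  exact ⟨p, fun h₀ => lt_irrefl _ (hl h₀), hp⟩

end Basic

end Sig

theorem contradict_recursive_constraints_general (σ : Sig)
    (s : σ.Srt) (n : ℕ) (hs : s ∉ Sig.SFF σ ∩ Sig.SFI σ)
    (Bs : List σ.Basic) (vs : List ((s : σ.Srt) × ℕ))
    (hwf : ∀ β ∈ Bs, Sig.Basic.WF β) (hsol : ∀ β ∈ Bs, Sig.Solved vs β)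
    (hreach : ∀ β ∈ Bs, Sig.Basic.ProperReach β ⟨s, n⟩ ⟨s, n⟩)
    (T : Set (σ.Tree s)) (hT : T.Finite) :
    (∃ vstar : σ.Tree s, vstar ∉ T ∧
      ∀ ρ : σ.Val, ρ s n = vstar → ∀ β ∈ Bs, ¬ Sig.Basic.Sat β ρ) ∧
    (s ∉ Sig.SFF σ → ∃ vstar : σ.Tree s, vstar.IsFinite ∧ vstar ∉ T ∧
      ∀ ρ : σ.Val, ρ s n = vstar → ∀ β ∈ Bs, ¬ Sig.Basic.Sat β ρ) ∧
    (s ∉ Sig.SFI σ → ∃ vstar : σ.Tree s, ¬ vstar.IsFinite ∧ vstar ∉ T ∧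
      ∀ ρ : σ.Val, ρ s n = vstar → ∀ β ∈ Bs, ¬ Sig.Basic.Sat β ρ) := by
  choose! per hper_ne hper using fun β hβ =>
    Sig.Basic.exists_periodic_of_properReach (hwf β hβ) (hsol β hβ) (hreach β hβ)
  have hfalsify : ∀ v : σ.Tree s, (∀ β ∈ Bs, ¬ v.Periodic (per β)) →
      ∀ ρ : σ.Val, ρ s n = v → ∀ β ∈ Bs, ¬ β.Sat ρ := by
    rintro v hv ρ rfl β hβ hsat
    exact hv β hβ (hper β hβ ρ hsat)
  have hfinite : s ∉ σ.SFF → ∃ v : σ.Tree s, v.IsFinite ∧ v ∉ T ∧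
      ∀ ρ : σ.Val, ρ s n = v → ∀ β ∈ Bs, ¬ β.Sat ρ := fun hsff => by
    obtain ⟨v, hv, hvT⟩ := (Set.Infinite.sdiff hsff hT).nonempty
    exact ⟨v, hv, hvT, hfalsify v fun β hβ hper => hper.not_isFinite (hper_ne β hβ) hv⟩
  have hinfinite : s ∉ σ.SFI → ∃ v : σ.Tree s, ¬ v.IsFinite ∧ v ∉ T ∧
      ∀ ρ : σ.Val, ρ s n = v → ∀ β ∈ Bs, ¬ β.Sat ρ := fun hsfi => by
    have hP : ∀ p ∈ Bs.map per, p ≠ [] := by simpa using hper_ne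
    obtain ⟨v, ⟨hv, hvP⟩, hvT⟩ :=
      ((Sig.Tree.infinite_setOf_aperiodic hsfi _ hP).sdiff hT).nonempty
    exact ⟨v, hv, hvT, hfalsify v fun β hβ => hvP _ (List.mem_map_of_mem hβ)⟩
  refine ⟨?_, hfinite, hinfinite⟩
  rcases not_and_or.mp hs with h | h
  · obtain ⟨v, -, hv⟩ := hfinite h
    exact ⟨v, hv⟩
  · obtain ⟨v, -, hv⟩ := hinfinite h
    exact ⟨v, hv⟩

/-- Let `v = ⟨s, n⟩` be a variable of a sort `s` with infinitely
many trees (`s ∉ S_FF ∩ S_FI`), let `β₁, …, β_m` be solved basic formulae in each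
of which `v` is properly reachable from itself, and let `T` be a finite set of
trees of sort `s`. Then there is a tree `v* ∉ T` of sort `s` such that every
valuation assigning `v*` to `v` falsifies every `βᵢ`; moreover `v*` can be chosen
finite if `s ∉ S_FF` and infinite if `s ∉ S_FI`. -/
theorem contradict_recursive_constraints (σ : Sig)
    (s : σ.Srt) (n : ℕ) (hs : s ∉ Sig.SFF σ ∩ Sig.SFI σ)
    (Bs : List σ.Basic) (vs : List ((s : σ.Srt) × ℕ)) (hnd : vs.Nodup)
    (hwf : ∀ β ∈ Bs, Sig.Basic.WF β) (hsol : ∀ β ∈ Bs, Sig.Solved vs β)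
    (hreach : ∀ β ∈ Bs, Sig.Basic.ProperReach β ⟨s, n⟩ ⟨s, n⟩)
    (T : Set (σ.Tree s)) (hT : T.Finite) :
    (∃ vstar : σ.Tree s, vstar ∉ T ∧
      ∀ ρ : σ.Val, ρ s n = vstar → ∀ β ∈ Bs, ¬ Sig.Basic.Sat β ρ) ∧
    (s ∉ Sig.SFF σ → ∃ vstar : σ.Tree s, vstar.IsFinite ∧ vstar ∉ T ∧
      ∀ ρ : σ.Val, ρ s n = vstar → ∀ β ∈ Bs, ¬ Sig.Basic.Sat β ρ) ∧
    (s ∉ Sig.SFI σ → ∃ vstar : σ.Tree s, ¬ vstar.IsFinite ∧ vstar ∉ T ∧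
      ∀ ρ : σ.Val, ρ s n = vstar → ∀ β ∈ Bs, ¬ Sig.Basic.Sat β ρ) :=
  contradict_recursive_constraints_general σ s n hs Bs vs hwf hsol hreach T hT
end
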